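/- In a unital category, given morphisms f : X → A, g : Y → A, f' : X' → A', g' : Y' → A', the product morphisms f × f' : X × X' → A × A' and g × g' : Y × Y' → A × A' Huq-commute if and only if both f and g Huq-commute and f' and g' Huq-commute. -/

import Mathlib

open CategoryTheory CategoryTheory.Limits

universe v u

noncomputable section

variable {C : Type u} [Category.{v} C]

/-- A pair of morphisms with common codomain is jointly strongly epimorphic:
it has the lifting property against all monomorphisms. -/
def JointlyStrongEpi {X Y Z : C} (f : X ⟶ Z) (g : Y ⟶ Z) : Prop :=
  ∀ {U V : C} (m : U ⟶ V) (_ : Mono m) (h : Z ⟶ V) (u : X ⟶ U) (v : Y ⟶ U),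
    u ≫ m = f ≫ h → v ≫ m = g ≫ h → ∃ t : Z ⟶ U, t ≫ m = h

variable (C) in
/-- A unital category: pointed, finitely complete, and the product inclusions
`⟨1,0⟩ : X → X × Y` and `⟨0,1⟩ : Y → X × Y` are jointly strongly epimorphic. -/
class Unital [HasZeroObject C] [HasZeroMorphisms C] [HasFiniteLimits C] : Prop where
  jse : ∀ X Y : C, JointlyStrongEpi (prod.lift (𝟙 X) (0 : X ⟶ Y)) (prod.lift (0 : Y ⟶ X) (𝟙 Y))

/-- `f : X ⟶ A` and `g : Y ⟶ A` Huq-commute: there is a cooperator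
`φ : X × Y ⟶ A` with `φ∘⟨1,0⟩ = f` and `φ∘⟨0,1⟩ = g`. -/
def HuqCommute [HasZeroMorphisms C] [HasFiniteLimits C] {X Y A : C} (f : X ⟶ A) (g : Y ⟶ A) : Prop :=
  ∃ φ : X ⨯ Y ⟶ A, prod.lift (𝟙 X) 0 ≫ φ = f ∧ prod.lift 0 (𝟙 Y) ≫ φ = g

/-! Cooperators transport along precomposition and postcomposition, and the two cooperators of
`(f, g)` and `(f', g')` pair into one for `(f × f', g × g')`. Conversely, `f` is recovered from
`f × f'` as `⟨1, 0⟩ ≫ (f × f') ≫ π₁`, so a cooperator for the products yields one for `(f, g)`,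
and symmetrically for `(f', g')`. -/

section HuqCommute

variable [HasZeroMorphisms C] [HasFiniteLimits C] {X Y A B : C}

theorem HuqCommute.precomp {X₀ Y₀ : C} {f : X ⟶ A} {g : Y ⟶ A} (h : HuqCommute f g)
    (a : X₀ ⟶ X) (b : Y₀ ⟶ Y) : HuqCommute (a ≫ f) (b ≫ g) := by
  obtain ⟨φ, hf, hg⟩ := h
  refine ⟨prod.map a b ≫ φ, ?_, ?_⟩
  · rw [← hf, prod.comp_lift_assoc]
    simp
  · rw [← hg, prod.comp_lift_assoc]
    simp

theorem HuqCommute.postcomp {f : X ⟶ A} {g : Y ⟶ A} (h : HuqCommute f g) (k : A ⟶ B) :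
    HuqCommute (f ≫ k) (g ≫ k) := by
  obtain ⟨φ, hf, hg⟩ := h
  exact ⟨φ ≫ k, by rw [reassoc_of% hf], by rw [reassoc_of% hg]⟩

theorem HuqCommute.prod_lift {f₁ : X ⟶ A} {g₁ : Y ⟶ A} {f₂ : X ⟶ B} {g₂ : Y ⟶ B}
    (h₁ : HuqCommute f₁ g₁) (h₂ : HuqCommute f₂ g₂) :
    HuqCommute (prod.lift f₁ f₂) (prod.lift g₁ g₂) := by
  obtain ⟨φ₁, hf₁, hg₁⟩ := h₁
  obtain ⟨φ₂, hf₂, hg₂⟩ := h₂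
  exact ⟨prod.lift φ₁ φ₂, by rw [prod.comp_lift, hf₁, hf₂], by rw [prod.comp_lift, hg₁, hg₂]⟩

theorem HuqCommute.prod_map {X' Y' A' : C} {f : X ⟶ A} {g : Y ⟶ A} {f' : X' ⟶ A'}
    {g' : Y' ⟶ A'} (h : HuqCommute f g) (h' : HuqCommute f' g') :
    HuqCommute (prod.map f f') (prod.map g g') := by
  simpa only [prod.lift_fst_comp_snd_comp] using
    (h.precomp prod.fst prod.fst).prod_lift (h'.precomp prod.snd prod.snd)

theorem HuqCommute.of_prod_map_left {X' Y' A' : C} {f : X ⟶ A} {g : Y ⟶ A} {f' : X' ⟶ A'}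
    {g' : Y' ⟶ A'} (h : HuqCommute (prod.map f f') (prod.map g g')) : HuqCommute f g := by
  simpa only [Category.assoc, prod.map_fst, prod.lift_fst_assoc, Category.id_comp] using
    (h.precomp (prod.lift (𝟙 X) 0) (prod.lift (𝟙 Y) 0)).postcomp prod.fst

theorem HuqCommute.of_prod_map_right {X' Y' A' : C} {f : X ⟶ A} {g : Y ⟶ A} {f' : X' ⟶ A'}
    {g' : Y' ⟶ A'} (h : HuqCommute (prod.map f f') (prod.map g g')) : HuqCommute f' g' := by
  simpa only [Category.assoc, prod.map_snd, prod.lift_snd_assoc, Category.id_comp] using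
    (h.precomp (prod.lift 0 (𝟙 X')) (prod.lift 0 (𝟙 Y'))).postcomp prod.snd

end HuqCommute

theorem stmt3 [HasZeroMorphisms C] [HasFiniteLimits C]
    {X Y A X' Y' A' : C} (f : X ⟶ A) (g : Y ⟶ A) (f' : X' ⟶ A') (g' : Y' ⟶ A') :
    HuqCommute (prod.map f f') (prod.map g g') ↔ (HuqCommute f g ∧ HuqCommute f' g') :=
  ⟨fun h => ⟨h.of_prod_map_left, h.of_prod_map_right⟩, fun ⟨h, h'⟩ => h.prod_map h'⟩
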